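/- arXiv:1109.2112 — 2 statements merged into one kernel-verified Lean document; each statement's English description precedes it below -/
import Mathlib

section
/- Let G be a loopless multigraph, k ≥ γ'_l(G), and suppose c is a proper k-edge-colouring of G − e where e joins v₀ and v₁. If F = (e; c; v₀; v₁, v₂, ..., v_ℓ) is a maximal fan hinged at v₀ with ℓ ≥ 3 distinct fan vertices, then the sets of missing colours at v₀, v₁, ..., v_ℓ (counting the uncoloured edge e as missing at v₀ and v₁) cannot all be pairwise disjoint. -/
open scoped Classical

structure Multigraph (V : Type) (E : Type) where
  inc : E → Sym2 V
  loopless : ∀ e, ¬ (inc e).IsDiag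

namespace Multigraph

variable {V E : Type} [Fintype V] [Fintype E] (G : Multigraph V E)

/-- Degree of a vertex: number of edges incident to it. -/
noncomputable def deg (v : V) : ℕ :=
  (Finset.univ.filter fun e : E => v ∈ G.inc e).card

/-- Multiplicity: number of parallel edges between `u` and `v`. -/
noncomputable def mul (u v : V) : ℕ :=
  (Finset.univ.filter fun e : E => G.inc e = s(u, v)).card

/-- `t(uv)`: max over common neighbours `w` of `μ(uv)+μ(uw)+μ(vw)`
(equal to `μ(uv)` if there is no common neighbour). -/
noncomputable def tri (u v : V) : ℕ :=
  G.mul u v +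
    (Finset.univ.filter fun w : V => w ≠ u ∧ w ≠ v ∧ 0 < G.mul u w ∧ 0 < G.mul v w).sup
      (fun w => G.mul u w + G.mul v w)

/-- The local bound at an edge `uv` (ceilings computed via `(·+1)/2` in `ℕ`). -/
noncomputable def gval (u v : V) : ℕ :=
  max (G.deg u + (G.deg v - G.mul u v + 1) / 2)
    (max (G.deg v + (G.deg u - G.mul u v + 1) / 2)
      ((G.deg u + G.deg v - G.mul u v + G.tri u v + 1) / 2))

/-- `γ'_l(G)`: maximum of `gval` over all (ordered) adjacent pairs of vertices. -/
noncomputable def gammaL : ℕ :=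
  (Finset.univ.filter fun p : V × V => 0 < G.mul p.1 p.2).sup fun p => G.gval p.1 p.2

/-- A proper `k`-edge-colouring: distinct edges sharing an endpoint get distinct colours. -/
def Proper {k : ℕ} (c : E → Fin k) : Prop :=
  ∀ e f : E, e ≠ f → (∃ x, x ∈ G.inc e ∧ x ∈ G.inc f) → c e ≠ c f

/-- A proper `k`-edge-colouring of `G - e₀` (the value of `c` on `e₀` is ignored). -/
def ProperExcept {k : ℕ} (e₀ : E) (c : E → Fin k) : Prop :=
  ∀ e f : E, e ≠ f → e ≠ e₀ → f ≠ e₀ → (∃ x, x ∈ G.inc e ∧ x ∈ G.inc f) → c e ≠ c f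

/-- The line graph of a multigraph. -/
def lineGraph : SimpleGraph E where
  Adj e f := e ≠ f ∧ ∃ x, x ∈ G.inc e ∧ x ∈ G.inc f
  symm := by
    constructor
    rintro e f ⟨hef, x, hx1, hx2⟩
    exact ⟨hef.symm, x, hx2, hx1⟩
  loopless := by constructor; rintro e ⟨h, -⟩; exact h rfl

end Multigraph

/-- `ω(v)`: size of the largest clique containing `v`. -/
noncomputable def omegaAt {α : Type} [Fintype α] (H : SimpleGraph α) (v : α) : ℕ :=
  ((Finset.univ : Finset (Finset α)).filter fun s : Finset α => H.IsClique (↑s : Set α) ∧ v ∈ s).sup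
    Finset.card

/-- A colour `a` is missing at `w` in the partial colouring `c` of `G - e`
(the uncoloured edge `e` does not count). -/
def MissingAt {V E : Type} {k : ℕ} (G : Multigraph V E) (e : E) (c : E → Fin k)
    (w : V) (a : Fin k) : Prop :=
  ∀ f : E, f ≠ e → w ∈ G.inc f → c f ≠ a

/-!
Each colour missing at a fan vertex `vᵢ` (`i ≥ 1`) but not at the hinge `v₀` sits on a coloured
edge at `v₀`, so disjointness of the missing sets gives `∑ᵢ |M(vᵢ)| ≤ d(v₀) - 1`. On the other
hand `|M(vᵢ)| ≥ k - d(vᵢ) ≥ ⌈(d(v₀) - μ(v₀vᵢ))/2⌉` by the local bound at the edge `v₀vᵢ`, and as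
`∑ᵢ μ(v₀vᵢ) ≤ d(v₀)` and `ℓ ≥ 3`, these lower bounds already add up to at least `d(v₀)`.
-/

open Finset

theorem le_sum_ceil_half_sub {ι : Type*} (s : Finset ι) (f : ι → ℕ) (d : ℕ)
    (hs : 3 ≤ #s) (hf : ∑ i ∈ s, f i ≤ d) : d ≤ ∑ i ∈ s, (d - f i + 1) / 2 := by
  have hsplit : #s * d ≤ ∑ i ∈ s, (d - f i) + ∑ i ∈ s, f i := by
    rw [← sum_add_distrib, ← smul_eq_mul, ← sum_const]
    exact sum_le_sum fun i _ => by omega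
  have hceil : ∑ i ∈ s, (d - f i) ≤ 2 * ∑ i ∈ s, (d - f i + 1) / 2 := by
    rw [mul_sum]
    exact sum_le_sum fun i _ => by omega
  have hcard : 3 * d ≤ #s * d := Nat.mul_le_mul_right d hs
  linarith

namespace Multigraph

variable {V E : Type} (G : Multigraph V E)

noncomputable def incidenceFinset [Fintype E] (v : V) : Finset E :=
  univ.filter fun f => v ∈ G.inc f

@[simp]
theorem mem_incidenceFinset [Fintype E] {v : V} {f : E} :
    f ∈ G.incidenceFinset v ↔ v ∈ G.inc f := by
  simp [incidenceFinset]

theorem card_incidenceFinset [Fintype E] (v : V) : #(G.incidenceFinset v) = G.deg v := rfl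

theorem sum_mul_le_deg [Fintype E] (u : V) (s : Finset V) : ∑ w ∈ s, G.mul u w ≤ G.deg u := by
  have hdisj : (s : Set V).PairwiseDisjoint fun w => univ.filter fun f : E => G.inc f = s(u, w) :=
    fun w _ w' _ hne => disjoint_filter.2 fun f _ h h' =>
      hne (Sym2.congr_right.1 (h.symm.trans h'))
  calc ∑ w ∈ s, G.mul u w = #(s.biUnion fun w => univ.filter fun f : E => G.inc f = s(u, w)) :=
        (card_biUnion hdisj).symm
    _ ≤ #(G.incidenceFinset u) := by
        refine card_le_card fun f hf => ?_
        obtain ⟨w, -, hfw⟩ := mem_biUnion.1 hf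
        simp [(mem_filter.1 hfw).2]
    _ = G.deg u := G.card_incidenceFinset u

theorem gval_le_gammaL [Fintype V] [Fintype E] {u v : V} (h : 0 < G.mul u v) :
    G.gval u v ≤ G.gammaL :=
  le_sup (f := fun p : V × V => G.gval p.1 p.2) (mem_filter.2 ⟨mem_univ (u, v), h⟩)

theorem deg_add_ceil_half_le_gammaL [Fintype V] [Fintype E] {u v : V} (h : 0 < G.mul u v) :
    G.deg v + (G.deg u - G.mul u v + 1) / 2 ≤ G.gammaL :=
  (le_max_left _ _).trans <| (le_max_right _ _).trans (G.gval_le_gammaL h)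

noncomputable def missingColours [Fintype E] {k : ℕ} (e : E) (c : E → Fin k) (w : V) :
    Finset (Fin k) :=
  univ.filter (MissingAt G e c w)

section Missing

variable [Fintype E] {k : ℕ} (e : E) (c : E → Fin k)

theorem mem_image_of_not_mem_missingColours {w : V} {a : Fin k}
    (ha : a ∉ G.missingColours e c w) : a ∈ ((G.incidenceFinset w).erase e).image c := by
  simp only [missingColours, mem_filter, mem_univ, true_and, MissingAt, not_forall,
    not_not] at ha
  obtain ⟨f, hfe, hwf, rfl⟩ := ha
  exact mem_image_of_mem c (mem_erase.2 ⟨hfe, (G.mem_incidenceFinset).2 hwf⟩)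

theorem le_card_missingColours_add_deg (w : V) : k ≤ #(G.missingColours e c w) + G.deg w :=
  calc k = #(univ : Finset (Fin k)) := (card_fin k).symm
    _ ≤ #(G.missingColours e c w ∪ ((G.incidenceFinset w).erase e).image c) :=
        card_le_card fun a _ => by
          by_cases ha : a ∈ G.missingColours e c w
          · exact mem_union_left _ ha
          · exact mem_union_right _ (G.mem_image_of_not_mem_missingColours e c ha)
    _ ≤ #(G.missingColours e c w) + #((G.incidenceFinset w).erase e) :=
        (card_union_le _ _).trans (Nat.add_le_add_left card_image_le _)
    _ ≤ #(G.missingColours e c w) + G.deg w :=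
        Nat.add_le_add_left (card_erase_le.trans_eq (G.card_incidenceFinset w)) _

theorem ceil_half_le_card_missingColours [Fintype V] {u v : V} (h : 0 < G.mul u v)
    (hk : G.gammaL ≤ k) : (G.deg u - G.mul u v + 1) / 2 ≤ #(G.missingColours e c v) := by
  have hlocal := G.deg_add_ceil_half_le_gammaL h
  have hmissing := G.le_card_missingColours_add_deg e c v
  omega

theorem sum_card_missingColours_add_one_le_deg {ι : Type*} {u : V} (hu : u ∈ G.inc e)
    (s : Finset ι) (w : ι → V)
    (hpair : (s : Set ι).PairwiseDisjoint fun i => G.missingColours e c (w i))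
    (hdisj : ∀ i ∈ s, Disjoint (G.missingColours e c (w i)) (G.missingColours e c u)) :
    ∑ i ∈ s, #(G.missingColours e c (w i)) + 1 ≤ G.deg u := by
  have hsub : s.biUnion (fun i => G.missingColours e c (w i)) ⊆
      ((G.incidenceFinset u).erase e).image c := by
    intro a ha
    obtain ⟨i, hi, hai⟩ := mem_biUnion.1 ha
    exact G.mem_image_of_not_mem_missingColours e c (disjoint_left.1 (hdisj i hi) hai)
  calc ∑ i ∈ s, #(G.missingColours e c (w i)) + 1
        = #(s.biUnion fun i => G.missingColours e c (w i)) + 1 := by rw [card_biUnion hpair]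
    _ ≤ #((G.incidenceFinset u).erase e) + 1 :=
        Nat.add_le_add_right ((card_le_card hsub).trans card_image_le) 1
    _ = G.deg u := card_erase_add_one ((G.mem_incidenceFinset).2 hu)

end Missing

end Multigraph

theorem maximal_fan_missing_sets_not_disjoint_general {V E : Type} [Fintype V] [Fintype E]
    (G : Multigraph V E) (k : ℕ) (hk : G.gammaL ≤ k)
    (ℓ : ℕ) (hℓ : 3 ≤ ℓ) (vs : Fin (ℓ + 1) → V) (hinj : Function.Injective vs)
    (e : E) (he : G.inc e = s(vs 0, vs 1))
    (c : E → Fin k)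
    (hnbr : ∀ i : Fin (ℓ + 1), 1 ≤ (i : ℕ) → 0 < G.mul (vs 0) (vs i)) :
    ¬ (∀ i j : Fin (ℓ + 1), i ≠ j → ∀ a : Fin k,
        MissingAt G e c (vs i) a → ¬ MissingAt G e c (vs j) a) := by
  intro hdisj
  have hmissing_disj : ∀ i j, i ≠ j →
      Disjoint (G.missingColours e c (vs i)) (G.missingColours e c (vs j)) :=
    fun i j hij => disjoint_filter.2 fun a _ => hdisj i j hij a
  set I : Finset (Fin (ℓ + 1)) := univ.erase 0
  have hmul_pos : ∀ i ∈ I, 0 < G.mul (vs 0) (vs i) := fun i hi =>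
    hnbr i (Nat.one_le_iff_ne_zero.2 (Fin.val_ne_zero_iff.2 (ne_of_mem_erase hi)))
  have hcard : 3 ≤ #I := by simpa [I, card_erase_of_mem] using hℓ
  have hmul : ∑ i ∈ I, G.mul (vs 0) (vs i) ≤ G.deg (vs 0) := by
    rw [← sum_image hinj.injOn]
    exact G.sum_mul_le_deg _ _
  have hlower : G.deg (vs 0) ≤ ∑ i ∈ I, #(G.missingColours e c (vs i)) :=
    (le_sum_ceil_half_sub I _ _ hcard hmul).trans <|
      sum_le_sum fun i hi => G.ceil_half_le_card_missingColours e c (hmul_pos i hi) hk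
  have hupper := G.sum_card_missingColours_add_one_le_deg e c (by simp [he]) I vs
    (fun i _ j _ hij => hmissing_disj i j hij)
    (fun i hi => hmissing_disj i 0 (ne_of_mem_erase hi))
  omega

/-- Let `k ≥ γ'_l(G)` and let `c` be a proper `k`-edge-colouring of
`G - e` with `e` joining `v₀` and `v₁`.  If `(e; c; v₀; v₁, …, v_ℓ)` is a maximal fan
hinged at `v₀` with `ℓ ≥ 3`, then the sets of missing colours at `v₀, v₁, …, v_ℓ`
cannot all be pairwise disjoint. -/
theorem maximal_fan_missing_sets_not_disjoint {V E : Type} [Fintype V] [Fintype E]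
    (G : Multigraph V E) (k : ℕ) (hk : G.gammaL ≤ k)
    (ℓ : ℕ) (hℓ : 3 ≤ ℓ) (vs : Fin (ℓ + 1) → V) (hinj : Function.Injective vs)
    (e : E) (he : G.inc e = s(vs 0, vs 1))
    (c : E → Fin k) (hc : G.ProperExcept e c)
    (hnbr : ∀ i : Fin (ℓ + 1), 1 ≤ (i : ℕ) → 0 < G.mul (vs 0) (vs i))
    (hfan : ∀ j : Fin (ℓ + 1), 2 ≤ (j : ℕ) →
      ∃ i : Fin (ℓ + 1), 1 ≤ (i : ℕ) ∧ (i : ℕ) < (j : ℕ) ∧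
        ∃ f : E, f ≠ e ∧ G.inc f = s(vs 0, vs j) ∧ MissingAt G e c (vs i) (c f))
    (hmax : ¬ ∃ u : V, (∀ i : Fin (ℓ + 1), u ≠ vs i) ∧
      ∃ f : E, f ≠ e ∧ G.inc f = s(vs 0, u) ∧
        ∃ i : Fin (ℓ + 1), 1 ≤ (i : ℕ) ∧ MissingAt G e c (vs i) (c f)) :
    ¬ (∀ i j : Fin (ℓ + 1), i ≠ j → ∀ a : Fin k,
        MissingAt G e c (vs i) a → ¬ MissingAt G e c (vs j) a) :=
  maximal_fan_missing_sets_not_disjoint_general G k hk ℓ hℓ vs hinj e he c hnbr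
end

section
/- Suppose ℓ ≥ 3, k ≥ d(v_i) + (d(v₀) − μ(v₀v_i))/2 for all i ∈ {1,...,ℓ}, and ℓ·k + 2 − Σᵢ μ(v₀v_i) ≤ Σᵢ d(v_i), where μ(v₀v_i) ≤ d(v₀) for each i and Σᵢ μ(v₀v_i) ≤ d(v₀). Then a contradiction follows; i.e., no such nonnegative integers exist. -/
open Finset

theorem two_mul_sum_add_card_mul_le_of_forall_le {ι : Type*} (s : Finset ι) (d μ : ι → ℕ)
    (c k : ℕ) (h : ∀ i ∈ s, 2 * d i + c ≤ 2 * k + μ i) :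
    2 * ∑ i ∈ s, d i + #s * c ≤ 2 * (#s * k) + ∑ i ∈ s, μ i := by
  have hsum := sum_le_sum h
  simpa only [sum_add_distrib, ← mul_sum, sum_const, smul_eq_mul, mul_left_comm 2] using hsum

theorem fan_counting_contradiction_general (ℓ k : ℕ) (d : Fin (ℓ + 1) → ℕ) (μ : Fin ℓ → ℕ)
    (hℓ : 3 ≤ ℓ)
    (hμsum : ∑ i : Fin ℓ, μ i ≤ d 0)
    (hki : ∀ i : Fin ℓ, 2 * d i.succ + d 0 ≤ 2 * k + μ i)
    (hsum : ℓ * k + 2 ≤ (∑ i : Fin ℓ, d i.succ) + ∑ i : Fin ℓ, μ i) :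
    False := by
  have hsummed := two_mul_sum_add_card_mul_le_of_forall_le univ (fun i => d i.succ) μ (d 0) k
    fun i _ => hki i
  rw [card_univ, Fintype.card_fin] at hsummed
  -- Together with `hsum` this gives `ℓ * d 0 + 4 ≤ 3 * ∑ μ ≤ 3 * d 0`.
  have hℓd : 3 * d 0 ≤ ℓ * d 0 := Nat.mul_le_mul_right (d 0) hℓ
  omega

/-- The counting contradiction at the heart of the maximal-fan lemma:
if `ℓ ≥ 3`, `k ≥ d(v_i) + (d(v₀) − μ(v₀v_i))/2` for all `1 ≤ i ≤ ℓ` (stated multiplied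
by 2), each `μ(v₀v_i) ≥ 1`, `Σ μ(v₀v_i) ≤ d(v₀)`, and
`ℓ·k + 2 − Σ μ(v₀v_i) ≤ Σ d(v_i)`, then we get a contradiction. -/
theorem fan_counting_contradiction (ℓ k : ℕ) (d : Fin (ℓ + 1) → ℕ) (μ : Fin ℓ → ℕ)
    (hℓ : 3 ≤ ℓ) (hk : 1 ≤ k)
    (hμ1 : ∀ i : Fin ℓ, 1 ≤ μ i)
    (hμd : ∀ i : Fin ℓ, μ i ≤ d 0)
    (hμsum : ∑ i : Fin ℓ, μ i ≤ d 0)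
    (hki : ∀ i : Fin ℓ, 2 * d i.succ + d 0 ≤ 2 * k + μ i)
    (hsum : ℓ * k + 2 ≤ (∑ i : Fin ℓ, d i.succ) + ∑ i : Fin ℓ, μ i) :
    False :=
  fan_counting_contradiction_general ℓ k d μ hℓ hμsum hki hsum
end
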